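/- arXiv:2108.03024 — 3 statements merged into one kernel-verified Lean document; each statement's English description precedes it below -/
import Mathlib

section
/- Let S be a circular sequence of length T ≥ 1 over a finite symbol set A with weight function w : A → ℕ, w(a) ≥ 1 for all a, and frequencies f : A → ℕ with f(a) ≥ 1 for all a. Suppose S is feasible and obj(S) < z* for an integer z*. Then for every symbol a, the set N_a = {k ∈ ℕ : k ≥ f(a) and w(a) · ⌈T / k⌉ < z*} is nonempty, and count_a(S) ≥ min N_a. -/
/-!
Every position `s` of `S` lies in the stretch between some occurrence `p` of `a` and the next one:
`s = p + d` with `d < gap S a p ≤ D_a(S)`. Hence the `count S a` stretches cover all `T`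
positions, so `T ≤ count S a * D_a(S)`, i.e. `⌈T / count S a⌉ ≤ D_a(S)`. Thus `count S a` itself
lies in `N_a`, because `w a * D_a(S) ≤ obj S < z*`.
-/

variable {A : Type*}

/-- The circular gap of sequence `S` at position `t` for symbol `a`:
the least positive `d` with `S ((t + d) % T) = a`. -/
noncomputable def gap {T : ℕ} (S : Fin T → A) (a : A) (t : Fin T) : ℕ :=
  sInf {d : ℕ | 0 < d ∧ S ⟨(t.val + d) % T, Nat.mod_lt _ t.pos⟩ = a}

/-- Number of positions where symbol `a` occurs in `S`. -/
def count {T : ℕ} [DecidableEq A] (S : Fin T → A) (a : A) : ℕ :=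
  (Finset.univ.filter fun t => S t = a).card

/-- `D_a(S)`: the maximum gap of symbol `a` over its positions in `S`. -/
noncomputable def Dmax {T : ℕ} [DecidableEq A] (S : Fin T → A) (a : A) : ℕ :=
  (Finset.univ.filter fun t => S t = a).sup (gap S a)

/-- Objective value: max over occurring symbols of weight times maximum gap. -/
noncomputable def obj {T : ℕ} [Fintype A] [DecidableEq A] (w : A → ℕ) (S : Fin T → A) : ℕ :=
  (Finset.univ.filter fun a => 1 ≤ count S a).sup fun a => w a * Dmax S a

section Gap

variable {T : ℕ} (S : Fin T → A) (a : A)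

lemma gap_spec {t : Fin T} (ht : S t = a) :
    0 < gap S a t ∧ S ⟨(t.val + gap S a t) % T, Nat.mod_lt _ t.pos⟩ = a := by
  have hT : (⟨(t.val + T) % T, Nat.mod_lt _ t.pos⟩ : Fin T) = t :=
    Fin.ext (by simp [Nat.mod_eq_of_lt t.isLt])
  have hmem : T ∈ {d : ℕ | 0 < d ∧ S ⟨(t.val + d) % T, Nat.mod_lt _ t.pos⟩ = a} :=
    ⟨t.pos, by rwa [hT]⟩
  exact Nat.sInf_mem ⟨T, hmem⟩

/-- Choose `p` with least backward distance `e` from `s`; if `gap S a p ≤ e`, the next occurrence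
after `p` would be closer to `s`. -/
lemma exists_add_lt_gap_eq {t₀ : Fin T} (ht₀ : S t₀ = a) (s : Fin T) :
    ∃ p : Fin T, S p = a ∧ ∃ d < gap S a p, (p.val + d) % T = s.val := by
  classical
  let P : ℕ → Prop := fun e => ∃ p : Fin T, S p = a ∧ (p.val + e) % T = s.val
  have hP : ∃ e, P e := ⟨s.val + T - t₀.val, t₀, ht₀, by
    rw [show t₀.val + (s.val + T - t₀.val) = s.val + T by omega, Nat.add_mod_right,
      Nat.mod_eq_of_lt s.isLt]⟩
  obtain ⟨p, hp, hps⟩ := Nat.find_spec hP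
  refine ⟨p, hp, Nat.find hP, ?_, hps⟩
  by_contra! hle
  obtain ⟨hgap_pos, hnext⟩ := gap_spec S a hp
  refine Nat.find_min hP (m := Nat.find hP - gap S a p) (by omega) ⟨_, hnext, ?_⟩
  rwa [Nat.mod_add_mod, show p.val + gap S a p + (Nat.find hP - gap S a p) = p.val + Nat.find hP by
    omega]

end Gap

section Dmax

variable {T : ℕ} [DecidableEq A] (S : Fin T → A) (a : A)

lemma le_count_mul_Dmax {t₀ : Fin T} (ht₀ : S t₀ = a) : T ≤ count S a * Dmax S a := by
  let occ := Finset.univ.filter fun t => S t = a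
  have hcover : Set.SurjOn
      (fun x : Fin T × ℕ => (⟨(x.1.val + x.2) % T, Nat.mod_lt _ x.1.pos⟩ : Fin T))
      ↑(occ ×ˢ Finset.range (Dmax S a)) ↑(Finset.univ : Finset (Fin T)) := by
    intro s _
    obtain ⟨p, hp, d, hd, hps⟩ := exists_add_lt_gap_eq S a ht₀ s
    have hgap_le : gap S a p ≤ Dmax S a := Finset.le_sup (by simpa [occ] using hp)
    exact ⟨(p, d), by simpa [occ, hp] using hd.trans_le hgap_le, Fin.ext hps⟩
  simpa [count, Finset.card_product] using Finset.card_le_card_of_surjOn _ hcover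

lemma mul_Dmax_le_obj [Fintype A] (w : A → ℕ) (ha : 1 ≤ count S a) :
    w a * Dmax S a ≤ obj w S :=
  Finset.le_sup (f := fun a => w a * Dmax S a) (by simpa using ha)

lemma ceil_div_count_le_Dmax (ha : 1 ≤ count S a) :
    (T + count S a - 1) / count S a ≤ Dmax S a := by
  obtain ⟨t₀, ht₀⟩ := Finset.card_pos.mp ha
  have hT := le_count_mul_Dmax S a (Finset.mem_filter.mp ht₀).2
  rw [Nat.div_le_iff_le_mul_add_pred ha]
  omega

end Dmax

theorem count_ge_min_lifted_general {T : ℕ} [Fintype A] [DecidableEq A]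
    (S : Fin T → A) (w f : A → ℕ) (hf : ∀ a, 1 ≤ f a)
    (hfeas : ∀ a, f a ≤ count S a) (zstar : ℤ)
    (hobj : (obj w S : ℤ) < zstar) :
    ∀ a : A,
      {k : ℕ | f a ≤ k ∧ ((w a * ((T + k - 1) / k) : ℕ) : ℤ) < zstar}.Nonempty ∧
      sInf {k : ℕ | f a ≤ k ∧ ((w a * ((T + k - 1) / k) : ℕ) : ℤ) < zstar}
        ≤ count S a := by
  intro a
  have ha : 1 ≤ count S a := (hf a).trans (hfeas a)
  have hmem :
      count S a ∈ {k : ℕ | f a ≤ k ∧ ((w a * ((T + k - 1) / k) : ℕ) : ℤ) < zstar} := by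
    refine ⟨hfeas a, lt_of_le_of_lt ?_ hobj⟩
    exact_mod_cast (Nat.mul_le_mul_left _ (ceil_div_count_le_Dmax S a ha)).trans
      (mul_Dmax_le_obj S a w ha)
  exact ⟨⟨_, hmem⟩, Nat.sInf_le hmem⟩

/-- lifting of the minimum number of occurrences, given an upper
bound `z*` on the objective value of the feasible sequence `S`. -/
theorem count_ge_min_lifted {T : ℕ} [Fintype A] [DecidableEq A] (hT : 1 ≤ T)
    (S : Fin T → A) (w f : A → ℕ) (hw : ∀ a, 1 ≤ w a) (hf : ∀ a, 1 ≤ f a)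
    (hfeas : ∀ a, f a ≤ count S a) (zstar : ℤ)
    (hobj : (obj w S : ℤ) < zstar) :
    ∀ a : A,
      {k : ℕ | f a ≤ k ∧ ((w a * ((T + k - 1) / k) : ℕ) : ℤ) < zstar}.Nonempty ∧
      sInf {k : ℕ | f a ≤ k ∧ ((w a * ((T + k - 1) / k) : ℕ) : ℤ) < zstar}
        ≤ count S a :=
  count_ge_min_lifted_general S w f hf hfeas zstar hobj
end

section
/- Let A be a finite symbol set with weight function w : A → ℕ, w(a) ≥ 1 for all a, frequencies f : A → ℕ with f(a) ≥ 1 for all a, an integer z*, and an integer T ≥ 1. For each symbol a let N_a = {k ∈ ℕ : k ≥ f(a) and w(a) · ⌈T / k⌉ < z*}; assume every N_a is nonempty, write k*_a = min N_a and K* = Σ_{a ∈ A} k*_a. Then every feasible circular sequence S of length T with obj(S) < z* satisfies count_a(S) ≤ T - K* + k*_a for every symbol a. -/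
/-!
The positions `t + 1, …, t + gap S b t` (mod `T`) following the occurrences `t` of `b` cover
the whole cycle, so `T ≤ ∑ gaps ≤ count S b * Dmax S b`. Hence
`w b * ⌈T / count S b⌉ ≤ w b * Dmax S b ≤ obj w S < z*`, i.e. `count S b ∈ N_b` and
`k*_b ≤ count S b`. Since the counts sum to `T`,
`count S a - k*_a ≤ ∑ b, (count S b - k*_b) = T - K*`.
-/

variable {A : Type*}

def cyclicShift {T : ℕ} (t : Fin T) (d : ℕ) : Fin T :=
  ⟨(t.val + d) % T, Nat.mod_lt _ t.pos⟩

section CyclicShift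

variable {T : ℕ}

lemma cyclicShift_cyclicShift (t : Fin T) (d e : ℕ) :
    cyclicShift (cyclicShift t d) e = cyclicShift t (d + e) :=
  Fin.ext <| by simp only [cyclicShift, Nat.mod_add_mod, add_assoc]

lemma cyclicShift_length (t : Fin T) : cyclicShift t T = t :=
  Fin.ext <| by simp only [cyclicShift, Nat.add_mod_right, Nat.mod_eq_of_lt t.isLt]

lemma exists_cyclicShift_eq (s p : Fin T) : ∃ e < T, cyclicShift s e = p := by
  refine ⟨(p - s).val, (p - s).isLt, Fin.ext ?_⟩
  have hsum : s.val + (T - s.val + p.val) = T + p.val := by omega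
  simp only [cyclicShift, Fin.sub_def, Nat.add_mod_mod, hsum, Nat.add_mod_left,
    Nat.mod_eq_of_lt p.isLt]

end CyclicShift

section Gap

variable {T : ℕ} (S : Fin T → A) {a : A}

lemma gap_pos_and_spec {t : Fin T} (ht : S t = a) :
    0 < gap S a t ∧ S (cyclicShift t (gap S a t)) = a :=
  Nat.sInf_mem (s := {d | 0 < d ∧ S (cyclicShift t d) = a})
    ⟨T, t.pos, by rwa [cyclicShift_length]⟩

/-- Every position `s` is reached from the last occurrence of `a` weakly before it. -/
lemma exists_occurrence_cyclicShift_eq {p : Fin T} (hp : S p = a) (s : Fin T) :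
    ∃ t, S t = a ∧ ∃ d ∈ Finset.Icc 1 (gap S a t), cyclicShift t d = s := by
  classical
  have hT := s.pos
  obtain ⟨e₀, he₀, hse₀⟩ := exists_cyclicShift_eq s p
  obtain ⟨e, hSe, heT, hlast⟩ : ∃ e, S (cyclicShift s e) = a ∧ e < T ∧
      ∀ m < T, S (cyclicShift s m) = a → m ≤ e := by
    refine ⟨Nat.findGreatest (fun e => S (cyclicShift s e) = a) (T - 1), ?_, ?_, ?_⟩
    · exact Nat.findGreatest_spec (P := fun e => S (cyclicShift s e) = a)
        (by omega : e₀ ≤ T - 1) (hse₀ ▸ hp)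
    · exact (Nat.findGreatest_le _).trans_lt (by omega)
    · exact fun m hm hSm => Nat.le_findGreatest (by omega) hSm
  refine ⟨cyclicShift s e, hSe, T - e, Finset.mem_Icc.mpr ⟨by omega, ?_⟩, ?_⟩
  · by_contra! hlt
    obtain ⟨hg, hSg⟩ := gap_pos_and_spec S hSe
    rw [cyclicShift_cyclicShift] at hSg
    have := hlast _ (by omega) hSg
    omega
  · rw [cyclicShift_cyclicShift, Nat.add_sub_cancel' heT.le, cyclicShift_length]

variable [DecidableEq A]

lemma card_le_sum_gap {p : Fin T} (hp : S p = a) :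
    T ≤ ∑ t ∈ Finset.univ.filter (S · = a), gap S a t := by
  have hcover : (Finset.univ : Finset (Fin T)) ⊆ (Finset.univ.filter (S · = a)).biUnion
      fun t => (Finset.Icc 1 (gap S a t)).image (cyclicShift t) := by
    intro s _
    obtain ⟨t, ht, d, hd, rfl⟩ := exists_occurrence_cyclicShift_eq S hp s
    exact Finset.mem_biUnion.mpr
      ⟨t, Finset.mem_filter.mpr ⟨Finset.mem_univ t, ht⟩, Finset.mem_image_of_mem _ hd⟩
  calc T = (Finset.univ : Finset (Fin T)).card := (Finset.card_fin T).symm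
    _ ≤ _ := Finset.card_le_card hcover
    _ ≤ _ := Finset.card_biUnion_le
    _ ≤ _ := Finset.sum_le_sum fun t _ => Finset.card_image_le.trans (Nat.card_Icc 1 _).le

lemma card_le_count_mul_Dmax (ha : 0 < count S a) : T ≤ count S a * Dmax S a := by
  obtain ⟨p, hp⟩ := Finset.card_pos.mp ha
  calc T ≤ ∑ t ∈ Finset.univ.filter (S · = a), gap S a t :=
        card_le_sum_gap S (Finset.mem_filter.mp hp).2
    _ ≤ ∑ _t ∈ Finset.univ.filter (S · = a), Dmax S a :=
        Finset.sum_le_sum fun _ ht => Finset.le_sup ht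
    _ = count S a * Dmax S a := by rw [Finset.sum_const, smul_eq_mul]; rfl

/-- `(T + k - 1) / k` is `⌈T / k⌉` for `0 < k`. -/
lemma weight_mul_ceil_div_count_le_obj [Fintype A] (w : A → ℕ) (ha : 0 < count S a) :
    w a * ((T + count S a - 1) / count S a) ≤ obj w S := by
  have hceil : (T + count S a - 1) / count S a ≤ Dmax S a := by
    have := card_le_count_mul_Dmax S ha
    rw [Nat.div_le_iff_le_mul_add_pred ha]
    omega
  calc w a * ((T + count S a - 1) / count S a) ≤ w a * Dmax S a :=
        Nat.mul_le_mul_left _ hceil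
    _ ≤ obj w S := Finset.le_sup (f := fun a => w a * Dmax S a)
        (Finset.mem_filter.mpr ⟨Finset.mem_univ a, ha⟩)

lemma sum_count_eq [Fintype A] : ∑ a, count S a = T :=
  (Finset.card_eq_sum_card_fiberwise fun t _ => Finset.mem_univ (S t)).symm.trans
    (Finset.card_fin T)

end Gap

theorem count_le_lifted_ub_general [Fintype A] [DecidableEq A]
    (w f : A → ℕ) (hf : ∀ a, 1 ≤ f a) (zstar : ℤ)
    (T : ℕ)
    (kstar : A → ℕ)
    (hkstar : ∀ a : A,
      kstar a = sInf {k : ℕ | f a ≤ k ∧ ((w a * ((T + k - 1) / k) : ℕ) : ℤ) < zstar})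
    (Kstar : ℕ) (hKstar : Kstar = ∑ a : A, kstar a)
    (S : Fin T → A) (hfeas : ∀ a, f a ≤ count S a)
    (hobj : (obj w S : ℤ) < zstar) :
    ∀ a : A, (count S a : ℤ) ≤ (T : ℤ) - (Kstar : ℤ) + (kstar a : ℤ) := by
  intro a
  have hk : ∀ b, kstar b ≤ count S b := fun b => by
    rw [hkstar b]
    exact Nat.sInf_le ⟨hfeas b, lt_of_le_of_lt
      (Int.ofNat_le.mpr (weight_mul_ceil_div_count_le_obj S w ((hf b).trans (hfeas b)))) hobj⟩
  have hsingle : (count S a : ℤ) - kstar a ≤ ∑ b, ((count S b : ℤ) - kstar b) :=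
    Finset.single_le_sum (fun b _ => sub_nonneg.mpr (Int.ofNat_le.mpr (hk b)))
      (Finset.mem_univ a)
  rw [Finset.sum_sub_distrib, ← Nat.cast_sum, ← Nat.cast_sum, sum_count_eq, ← hKstar]
    at hsingle
  linarith

/-- upper bound `T - K* + k*_a` on the number of occurrences of each
symbol in a feasible sequence improving on `z*`, where `k*_a = min N_a` and
`K* = Σ_a k*_a`. -/
theorem count_le_lifted_ub [Fintype A] [DecidableEq A]
    (w f : A → ℕ) (hw : ∀ a, 1 ≤ w a) (hf : ∀ a, 1 ≤ f a) (zstar : ℤ)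
    (T : ℕ) (hT : 1 ≤ T)
    (hne : ∀ a : A,
      {k : ℕ | f a ≤ k ∧ ((w a * ((T + k - 1) / k) : ℕ) : ℤ) < zstar}.Nonempty)
    (kstar : A → ℕ)
    (hkstar : ∀ a : A,
      kstar a = sInf {k : ℕ | f a ≤ k ∧ ((w a * ((T + k - 1) / k) : ℕ) : ℤ) < zstar})
    (Kstar : ℕ) (hKstar : Kstar = ∑ a : A, kstar a)
    (S : Fin T → A) (hfeas : ∀ a, f a ≤ count S a)
    (hobj : (obj w S : ℤ) < zstar) :
    ∀ a : A, (count S a : ℤ) ≤ (T : ℤ) - (Kstar : ℤ) + (kstar a : ℤ) :=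
  count_le_lifted_ub_general w f hf zstar T kstar hkstar Kstar hKstar S hfeas hobj
end

section
/- Let A = {a_1, …, a_n} with n ≥ 2 symbols, frequencies f : A → ℕ with f(a_i) ≥ 1 for all i, and T = Σ_i f(a_i). Define the block sequence S : Fin T → A by S(t) = a_i for the unique index i with Σ_{j < i} f(a_j) ≤ t < Σ_{j ≤ i} f(a_j). Then S is feasible (count_{a_i}(S) = f(a_i) for all i) and D_{a_i}(S) = T - f(a_i) + 1 for every i; consequently, for any weight function w with w(a) ≥ 1 for all a, obj(S) = max_i w(a_i) · (T - f(a_i) + 1). -/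
/-!
In the block sequence the occurrences of each symbol form one arc of the circle, of length
`f a`. Inside the arc every gap is `1`; from the last position of the arc the next occurrence
is the first position of the same arc, reached after wrapping around the circle, at distance
`T - f a + 1`. Since every symbol occurs, the objective is the maximum over all symbols.
-/

variable {A : Type*}

variable {T : ℕ} {S : Fin T → A} {a : A}

theorem gap_eq_of_forall_lt_ne {t : Fin T} {d : ℕ} (hd : 0 < d)
    (hdS : S ⟨(t.val + d) % T, Nat.mod_lt _ t.pos⟩ = a)
    (hmin : ∀ e, 0 < e → e < d → S ⟨(t.val + e) % T, Nat.mod_lt _ t.pos⟩ ≠ a) :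
    gap S a t = d :=
  IsLeast.csInf_eq ⟨⟨hd, hdS⟩, fun e ⟨he, heS⟩ => not_lt.1 fun h => hmin e he h heS⟩

theorem obj_eq_sup_of_forall_count_pos [Fintype A] [DecidableEq A] (w : A → ℕ)
    (hS : ∀ a, 1 ≤ count S a) : obj w S = Finset.univ.sup fun a => w a * Dmax S a := by
  rw [obj, Finset.filter_true_of_mem fun a _ => hS a]

section Block

variable {p q : ℕ}

theorem count_eq_of_block [DecidableEq A]
    (hblock : ∀ t : Fin T, S t = a ↔ p ≤ t.val ∧ t.val < q)
    (hqT : q ≤ T) : count S a = q - p := by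
  rw [count, ← Nat.card_Ico, ← Finset.card_map Fin.valEmbedding]
  congr 1
  ext m
  simp only [Finset.mem_map, Finset.mem_filter, Finset.mem_univ, true_and, hblock,
    Fin.valEmbedding_apply, Finset.mem_Ico]
  exact ⟨fun ⟨t, ht, htm⟩ => htm ▸ ht, fun hm => ⟨⟨m, by omega⟩, hm, rfl⟩⟩

theorem gap_eq_one_of_block
    (hblock : ∀ t : Fin T, S t = a ↔ p ≤ t.val ∧ t.val < q)
    {t : Fin T} (ht : S t = a) (htq : t.val + 1 < q) (hqT : q ≤ T) : gap S a t = 1 := by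
  refine gap_eq_of_forall_lt_ne one_pos ?_ fun e he he1 => absurd he1 (by omega)
  have := (hblock t).1 ht
  rw [hblock]
  simp only [Nat.mod_eq_of_lt (show t.val + 1 < T by omega)]
  omega

theorem gap_last_eq_of_block
    (hblock : ∀ t : Fin T, S t = a ↔ p ≤ t.val ∧ t.val < q)
    (hpq : p < q) (hqT : q ≤ T) :
    gap S a ⟨q - 1, by omega⟩ = T - (q - p) + 1 := by
  refine gap_eq_of_forall_lt_ne (by omega) ?_ fun e he heT => ?_
  · rw [hblock]
    have : q - 1 + (T - (q - p) + 1) = p + T := by omega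
    simp only [this, Nat.add_mod_right, Nat.mod_eq_of_lt (show p < T by omega)]
    omega
  · rw [Ne, hblock]
    simp only
    rcases lt_or_ge (q - 1 + e) T with h | h
    · rw [Nat.mod_eq_of_lt h]; omega
    · rw [Nat.mod_eq_sub_mod h, Nat.mod_eq_of_lt (by omega)]; omega

theorem Dmax_eq_of_block [DecidableEq A]
    (hblock : ∀ t : Fin T, S t = a ↔ p ≤ t.val ∧ t.val < q)
    (hpq : p < q) (hqT : q ≤ T) : Dmax S a = T - (q - p) + 1 := by
  have hlast : S ⟨q - 1, by omega⟩ = a :=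
    (hblock _).2 ⟨by simp only; omega, by simp only; omega⟩
  refine le_antisymm (Finset.sup_le fun t ht => ?_) ?_
  · rw [Finset.mem_filter] at ht
    rcases lt_or_ge (t.val + 1) q with h | h
    · rw [gap_eq_one_of_block hblock ht.2 h hqT]; omega
    · have : t = ⟨q - 1, by omega⟩ := Fin.ext (by have := (hblock t).1 ht.2; simp only; omega)
      rw [this, gap_last_eq_of_block hblock hpq hqT]
  · rw [← gap_last_eq_of_block hblock hpq hqT]
    exact Finset.le_sup (Finset.mem_filter.2 ⟨Finset.mem_univ _, hlast⟩)

end Block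

theorem block_sequence_properties_general (n : ℕ) (f : Fin n → ℕ)
    (hf : ∀ i, 1 ≤ f i) (T : ℕ) (hTdef : T = ∑ i, f i)
    (S : Fin T → Fin n)
    (hS : ∀ (t : Fin T) (i : Fin n), S t = i ↔
      (∑ j ∈ Finset.Iio i, f j ≤ t.val ∧ t.val < ∑ j ∈ Finset.Iic i, f j)) :
    (∀ i, count S i = f i) ∧
    (∀ i, Dmax S i = T - f i + 1) ∧
    (∀ w : Fin n → ℕ, (∀ i, 1 ≤ w i) →
      obj w S = Finset.univ.sup fun i => w i * (T - f i + 1)) := by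
  have hlen : ∀ i, ∑ j ∈ Finset.Iic i, f j - ∑ j ∈ Finset.Iio i, f j = f i := fun i => by
    rw [← Finset.sum_Iio_add_eq_sum_Iic]; omega
  have hend : ∀ i, ∑ j ∈ Finset.Iic i, f j ≤ T := fun i =>
    hTdef ▸ Finset.sum_le_sum_of_subset (Finset.subset_univ _)
  have hcount : ∀ i, count S i = f i := fun i => by
    rw [count_eq_of_block (hS · i) (hend i), hlen]
  have hDmax : ∀ i, Dmax S i = T - f i + 1 := fun i => by
    have hpq : ∑ j ∈ Finset.Iio i, f j < ∑ j ∈ Finset.Iic i, f j := by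
      have := hlen i; have := hf i; omega
    rw [Dmax_eq_of_block (hS · i) hpq (hend i), hlen]
  refine ⟨hcount, hDmax, fun w _ => ?_⟩
  simp only [obj_eq_sup_of_forall_count_pos w fun i => (hcount i).symm ▸ hf i, hDmax]

/-- the block sequence (symbols in index order, each `a_i` placed
`f a_i` times consecutively, with `T = Σ f`) is feasible, realizes
`D_{a_i}(S) = T - f a_i + 1` for every `i`, and has objective value
`max_i w a_i * (T - f a_i + 1)`. -/
theorem block_sequence_properties (n : ℕ) (hn : 2 ≤ n) (f : Fin n → ℕ)
    (hf : ∀ i, 1 ≤ f i) (T : ℕ) (hTdef : T = ∑ i, f i)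
    (S : Fin T → Fin n)
    (hS : ∀ (t : Fin T) (i : Fin n), S t = i ↔
      (∑ j ∈ Finset.Iio i, f j ≤ t.val ∧ t.val < ∑ j ∈ Finset.Iic i, f j)) :
    (∀ i, count S i = f i) ∧
    (∀ i, Dmax S i = T - f i + 1) ∧
    (∀ w : Fin n → ℕ, (∀ i, 1 ≤ w i) →
      obj w S = Finset.univ.sup fun i => w i * (T - f i + 1)) :=
  block_sequence_properties_general n f hf T hTdef S hS
end
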